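/- (Casorati determinant D_3, type q-(A_2+A_1)^{(1)}.) Suppose Y, Ȳ ∈ ℂ[[X]] satisfy both (1−a_1X)(1−a_2X)·Y(qX) = Y and (1−a_1X)·Ȳ = Y, let (P, Q) be a Padé pair for Y and (P̄, Q̄) a Padé pair for Ȳ. Then there exists a constant c ∈ ℂ such that (1−a_2X)·P(qX)·Q̄(X) − P̄(X)·Q(qX) = c·X^{m+n+1}. -/

import Mathlib

/-!
Write `u = 1 - a₁X` and `v = 1 - a₂X`. Since `u` is a unit, the two functional equations give
`Ȳ = v · Y(qX)`. Rescaling the Padé condition for `Y` gives `Y(qX)·Q(qX) ≡ P(qX) mod X^{m+n+1}`,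
so modulo `X^{m+n+1}`
`v·P(qX)·Q̄ ≡ v·Y(qX)·Q(qX)·Q̄ = Ȳ·Q̄·Q(qX) ≡ P̄·Q(qX)`.
The Casorati determinant is thus a polynomial of degree at most `m + n + 1` divisible by
`X^{m+n+1}`, i.e. a constant multiple of `X^{m+n+1}`.
-/

open Polynomial

namespace Polynomial

variable {R : Type*} [CommSemiring R]

theorem coe_comp_C_mul_X (p : R[X]) (r : R) :
    ((p.comp (C r * X) : R[X]) : PowerSeries R) = PowerSeries.rescale r (p : PowerSeries R) := by
  ext k
  rw [coeff_coe, PowerSeries.coeff_rescale, coeff_coe, comp_C_mul_X_coeff, mul_comm]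

theorem natDegree_comp_C_mul_X_le (p : R[X]) (r : R) :
    (p.comp (C r * X)).natDegree ≤ p.natDegree :=
  natDegree_le_iff_coeff_eq_zero.mpr fun k hk ↦ by
    rw [comp_C_mul_X_coeff, coeff_eq_zero_of_natDegree_lt hk, zero_mul]

theorem eq_C_mul_X_pow_of_natDegree_le_of_X_pow_dvd {p : R[X]} {N : ℕ} (hdeg : p.natDegree ≤ N)
    (hdvd : PowerSeries.X ^ N ∣ (p : PowerSeries R)) : p = C (p.coeff N) * X ^ N := by
  ext k
  rw [coeff_C_mul_X_pow]
  rcases lt_trichotomy k N with hk | rfl | hk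
  · rw [if_neg hk.ne, ← coeff_coe]
    exact PowerSeries.X_pow_dvd_iff.mp hdvd k hk
  · rw [if_pos rfl]
  · rw [if_neg hk.ne', coeff_eq_zero_of_natDegree_lt (hdeg.trans_lt hk)]

end Polynomial

namespace PowerSeries

variable {R : Type*} [CommRing R]

theorem isUnit_one_sub_C_mul_X (a : R) : IsUnit (1 - C a * X : PowerSeries R) := by
  simp [isUnit_iff_constantCoeff]

theorem X_pow_dvd_rescale {N : ℕ} {f : PowerSeries R} (h : X ^ N ∣ f) (a : R) :
    X ^ N ∣ rescale a f := by
  obtain ⟨g, rfl⟩ := h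
  rw [map_mul, map_pow, rescale_X, mul_pow, mul_assoc]
  exact dvd_mul_of_dvd_right (dvd_mul_right _ _) _

theorem X_pow_dvd_casorati {N : ℕ} {a : R} {v Y P Q Ybar Pbar Qbar : PowerSeries R}
    (hYbar : Ybar = v * rescale a Y) (hPade : X ^ N ∣ Y * Q - P)
    (hPadebar : X ^ N ∣ Ybar * Qbar - Pbar) :
    X ^ N ∣ v * rescale a P * Qbar - Pbar * rescale a Q := by
  have hPade' := X_pow_dvd_rescale hPade a
  rw [map_sub, map_mul] at hPade'
  subst hYbar
  convert (dvd_mul_of_dvd_left hPadebar (rescale a Q)).sub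
    (dvd_mul_of_dvd_left hPade' (v * Qbar)) using 1
  ring

end PowerSeries

/-- Casorati determinant `D_3` for type q-(A_2+A_1)^{(1)}. -/
theorem casorati_D3_qA2A1
    (q a1 a2 : ℂ) (m n : ℕ)
    (Y Ybar : PowerSeries ℂ)
    (hY : (1 - PowerSeries.C a1 * PowerSeries.X) * (1 - PowerSeries.C a2 * PowerSeries.X) *
        PowerSeries.rescale q Y = Y)
    (hYY : (1 - PowerSeries.C a1 * PowerSeries.X) * Ybar = Y)
    (P Q : Polynomial ℂ) (hdP : P.degree ≤ m) (hdQ : Q.degree ≤ n)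
    (hPade : (PowerSeries.X : PowerSeries ℂ) ^ (m + n + 1) ∣
      Y * (Q : PowerSeries ℂ) - (P : PowerSeries ℂ))
    (Pbar Qbar : Polynomial ℂ) (hdPbar : Pbar.degree ≤ m) (hdQbar : Qbar.degree ≤ n)
    (hPadebar : (PowerSeries.X : PowerSeries ℂ) ^ (m + n + 1) ∣
      Ybar * (Qbar : PowerSeries ℂ) - (Pbar : PowerSeries ℂ)) :
    ∃ c : ℂ,
      (1 - C a2 * X) * (P.comp (C q * X)) * Qbar - Pbar * (Q.comp (C q * X)) =
        C c * X ^ (m + n + 1) := by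
  have hYbar : Ybar = (1 - PowerSeries.C a2 * PowerSeries.X) * PowerSeries.rescale q Y :=
    (PowerSeries.isUnit_one_sub_C_mul_X a1).mul_left_cancel <|
      hYY.trans <| hY.symm.trans (mul_assoc _ _ _)
  have hdvd := PowerSeries.X_pow_dvd_casorati hYbar hPade hPadebar
  rw [← coe_comp_C_mul_X, ← coe_comp_C_mul_X] at hdvd
  rw [← natDegree_le_iff_degree_le] at hdP hdQ hdPbar hdQbar
  have hv : (1 - C a2 * X : ℂ[X]).natDegree ≤ 1 := by compute_degree
  have hdeg : ((1 - C a2 * X) * (P.comp (C q * X)) * Qbar - Pbar * (Q.comp (C q * X))).natDegree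
      ≤ m + n + 1 := by
    have hP := natDegree_comp_C_mul_X_le P q
    have hQ := natDegree_comp_C_mul_X_le Q q
    refine (natDegree_sub_le _ _).trans (max_le ?_ ?_)
    · exact natDegree_mul_le.trans (by grw [natDegree_mul_le]; omega)
    · exact natDegree_mul_le.trans (by omega)
  exact ⟨_, eq_C_mul_X_pow_of_natDegree_le_of_X_pow_dvd hdeg (by push_cast; exact hdvd)⟩
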